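/- Let B ~ Exp(λ) and q ≥ 2 an integer. For every integer l and digit s ∈ {0,…,q-1}, the l-th digit of the base-q expansion of B satisfies Pr{B_l = s} = (1 - e^{-λ q^l}) e^{-λ q^l s} / (1 - e^{-λ q^{l+1}}). -/
import Mathlib


open MeasureTheory ProbabilityTheory Set

lemma expM_Iic (lam : ℝ) (hlam : 0 < lam) {x : ℝ} (hx : 0 ≤ x) :
    expMeasure lam (Iic x) = ENNReal.ofReal (1 - Real.exp (-(lam * x))) := by
  rw [expMeasure, gammaMeasure, withDensity_apply _ measurableSet_Iic]
  have h : (gammaPDF 1 lam) = exponentialPDF lam := rfl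
  rw [h, lintegral_exponentialPDF_eq_antiDeriv hlam, if_pos hx]

lemma expM_Ico (lam : ℝ) (hlam : 0 < lam) {a b : ℝ} (ha : 0 ≤ a) (hab : a ≤ b) :
    expMeasure lam (Ico a b) =
      ENNReal.ofReal (Real.exp (-(lam * a)) - Real.exp (-(lam * b))) := by
  have hac : expMeasure lam ≪ (volume : Measure ℝ) := withDensity_absolutelyContinuous _ _
  have hIco : expMeasure lam (Ico a b) = expMeasure lam (Ioc a b) :=
    measure_congr (Ico_ae_eq_Ioc' (hac (measure_singleton a)) (hac (measure_singleton b)))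
  have hdiff : Iic b \ Iic a = Ioc a b := Iic_sdiff_Iic
  have hfin : expMeasure lam (Iic a) ≠ ⊤ := by
    rw [expM_Iic lam hlam ha]; exact ENNReal.ofReal_ne_top
  have hmd := measure_diff (μ := expMeasure lam) (Iic_subset_Iic.2 hab)
    measurableSet_Iic.nullMeasurableSet hfin
  rw [hIco, ← hdiff, hmd, expM_Iic lam hlam ha, expM_Iic lam hlam (ha.trans hab),
    ← ENNReal.ofReal_sub _ (by
      have : Real.exp (-(lam * a)) ≤ 1 := Real.exp_le_one_iff.2 (by nlinarith)
      linarith)]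
  ring_nf

theorem stmt_14 (lam : ℝ) (hlam : 0 < lam) (q : ℕ) (hq : 2 ≤ q) (l : ℤ) (s : ℕ) (hs : s < q) :
    expMeasure lam {x : ℝ | ⌊x / (q : ℝ) ^ l⌋ % (q : ℤ) = (s : ℤ)} =
      ENNReal.ofReal ((1 - Real.exp (-(lam * (q : ℝ) ^ l))) *
          Real.exp (-(lam * (q : ℝ) ^ l * (s : ℝ))) /
        (1 - Real.exp (-(lam * (q : ℝ) ^ (l + 1))))) := by
  set c : ℝ := (q : ℝ) ^ l with hc_def
  have hq0 : (0 : ℝ) < q := by positivity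
  have hc : 0 < c := zpow_pos hq0 l
  set S : Set ℝ := {x : ℝ | ⌊x / c⌋ % (q : ℤ) = (s : ℤ)} with hS_def
  -- S ∩ Ici 0 as a union of intervals
  have hset : S ∩ Ici 0 = ⋃ k : ℕ, Ico (c * (q * k + s)) (c * (q * k + s + 1)) := by
    ext x
    simp only [mem_inter_iff, mem_setOf_eq, mem_Ici, mem_iUnion, mem_Ico, hS_def]
    constructor
    · rintro ⟨hmod, hx0⟩
      have hn0 : 0 ≤ ⌊x / c⌋ := Int.floor_nonneg.2 (by positivity)
      set n : ℤ := ⌊x / c⌋ with hn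
      have hqpos : (0 : ℤ) < (q : ℤ) := by positivity
      have hdiv0 : 0 ≤ n / (q : ℤ) := Int.ediv_nonneg hn0 hqpos.le
      refine ⟨(n / (q : ℤ)).toNat, ?_, ?_⟩
      all_goals {
        have hne : n = (q : ℤ) * (((n / (q : ℤ)).toNat : ℤ)) + (s : ℤ) := by
          have hdm := Int.mul_ediv_add_emod n (q : ℤ)
          rw [Int.toNat_of_nonneg hdiv0]
          omega
        have hcast : (q : ℝ) * (((n / (q : ℤ)).toNat : ℕ) : ℝ) + (s : ℝ) = (n : ℝ) := by
          exact_mod_cast (congrArg (fun z : ℤ => (z : ℝ)) hne.symm)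
        have h1 : (n : ℝ) ≤ x / c := Int.floor_le _
        have h2 : x / c < (n : ℝ) + 1 := Int.lt_floor_add_one _
        have h1' : (n : ℝ) * c ≤ x := (le_div_iff₀ hc).mp h1
        have h2' : x < ((n : ℝ) + 1) * c := (div_lt_iff₀ hc).mp h2
        nlinarith [hcast, h1', h2'] }
    · rintro ⟨k, h1, h2⟩
      have hlow : (0 : ℝ) ≤ c * (q * k + s) := by positivity
      have hx0 : 0 ≤ x := hlow.trans h1
      have hfloor : ⌊x / c⌋ = (q : ℤ) * k + s := by
        rw [Int.floor_eq_iff]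
        constructor
        · push_cast
          rw [le_div_iff₀ hc]
          calc ((q : ℝ) * k + s) * c = c * (q * k + s) := by ring
            _ ≤ x := h1
        · push_cast
          rw [div_lt_iff₀ hc]
          calc x < c * (q * k + s + 1) := h2
            _ = ((q : ℝ) * k + s + 1) * c := by ring
      refine ⟨?_, hx0⟩
      rw [hfloor, add_comm, Int.add_mul_emod_self_left]
      exact Int.emod_eq_of_lt (by positivity) (by exact_mod_cast hs)
  -- measure of negative part is zero
  have hneg : expMeasure lam (Iio 0) = 0 := by
    rw [expMeasure, gammaMeasure, withDensity_apply _ measurableSet_Iio]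
    have h : (gammaPDF 1 lam) = exponentialPDF lam := rfl
    rw [h]
    exact lintegral_exponentialPDF_of_nonpos le_rfl
  have hsplit : expMeasure lam S = expMeasure lam (S ∩ Ici 0) := by
    have : S ⊆ (S ∩ Ici 0) ∪ Iio 0 := by
      intro x hx
      rcases le_or_gt 0 x with h | h
      · exact Or.inl ⟨hx, h⟩
      · exact Or.inr h
    refine le_antisymm ?_ (measure_mono inter_subset_left)
    calc expMeasure lam S ≤ expMeasure lam ((S ∩ Ici 0) ∪ Iio 0) := measure_mono this
      _ ≤ expMeasure lam (S ∩ Ici 0) + expMeasure lam (Iio 0) := measure_union_le _ _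
      _ = expMeasure lam (S ∩ Ici 0) := by rw [hneg, add_zero]
  rw [hsplit, hset]
  -- disjointness
  have hdisj : Pairwise (Function.onFun Disjoint
      (fun k : ℕ => Ico (c * (q * k + s)) (c * (q * k + s + 1)))) := by
    intro i j hij
    have key : ∀ i j : ℕ, i < j →
        Disjoint (Ico (c * (q * i + s)) (c * (q * i + s + 1)))
          (Ico (c * (q * j + s)) (c * (q * j + s + 1))) := by
      intro i j h
      apply Set.Ico_disjoint_Ico.mpr
      have hle : c * (q * i + s + 1) ≤ c * (q * j + s) := by
        have h1 : (i : ℝ) + 1 ≤ j := by exact_mod_cast h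
        have h2 : (2 : ℝ) ≤ q := by exact_mod_cast hq
        have h3 : (q : ℝ) * (i + 1) ≤ q * j := mul_le_mul_of_nonneg_left h1 (by linarith)
        nlinarith
      exact le_trans (min_le_left _ _) (le_trans hle (le_max_right _ _))
    rcases lt_or_gt_of_ne hij with h | h
    · exact key i j h
    · exact (key j i h).symm
  rw [measure_iUnion hdisj (fun k => measurableSet_Ico)]
  have hterm : ∀ k : ℕ, expMeasure lam (Ico (c * (q * k + s)) (c * (q * k + s + 1))) =
      ENNReal.ofReal (((1 - Real.exp (-(lam * c))) * Real.exp (-(lam * c * s))) *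
        Real.exp (-(lam * c * q)) ^ k) := by
    intro k
    rw [expM_Ico lam hlam (by positivity) (by nlinarith)]
    congr 1
    have e1 : Real.exp (-(lam * (c * (q * k + s)))) =
        Real.exp (-(lam * c * q)) ^ k * Real.exp (-(lam * c * s)) := by
      rw [← Real.exp_nat_mul, ← Real.exp_add]; congr 1; ring
    have e2 : Real.exp (-(lam * (c * (q * k + s + 1)))) =
        Real.exp (-(lam * c * q)) ^ k * Real.exp (-(lam * c * s)) * Real.exp (-(lam * c)) := by
      rw [← Real.exp_nat_mul, ← Real.exp_add, ← Real.exp_add]; congr 1; ring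
    rw [e1, e2]; ring
  simp_rw [hterm]
  set A : ℝ := (1 - Real.exp (-(lam * c))) * Real.exp (-(lam * c * s)) with hA
  set r : ℝ := Real.exp (-(lam * c * q)) with hr
  have hr0 : 0 ≤ r := Real.exp_nonneg _
  have hr1 : r < 1 := by
    rw [hr, Real.exp_lt_one_iff]
    have : 0 < lam * c * q := by positivity
    linarith
  have hA0 : 0 ≤ A := by
    have : Real.exp (-(lam * c)) < 1 := by
      rw [Real.exp_lt_one_iff]
      have : 0 < lam * c := by positivity
      linarith
    have := Real.exp_nonneg (-(lam * c * s))
    nlinarith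
  rw [← ENNReal.ofReal_tsum_of_nonneg (fun k => by positivity)
    (by exact (summable_geometric_of_lt_one hr0 hr1).mul_left A)]
  rw [tsum_mul_left, tsum_geometric_of_lt_one hr0 hr1]
  congr 1
  have hz : (q : ℝ) ^ (l + 1) = c * q := by
    rw [hc_def, zpow_add_one₀ (ne_of_gt hq0)]
  rw [hz, hA, hr]
  field_simp
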